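/- Let A be a topological ring, Γ and Δ linearly ordered commutative groups with zero, v : A → Γ a continuous valuation, and φ : Γ → Δ a quotient by a convex subgroup. Set w = φ ∘ v (a vertical generalization of v). Then w is continuous if and only if w(a) < 1 for every topologically nilpotent a ∈ A. (Lemma 3.3, main characterization.) -/

import Mathlib

/-- An element of a topological ring is topologically nilpotent if its powers tend to zero. -/
def IsTopologicallyNilpotentElem {A : Type*} [Ring A] [TopologicalSpace A] (a : A) : Prop :=
  Filter.Tendsto (fun n : ℕ => a ^ n) Filter.atTop (nhds 0)

/-- The value group of a `Γ`-valued function on `A`: the subgroup of `Γˣ` generated by the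
nonzero values. -/
def valueGroupOf {A : Type*} {Γ : Type*} [LinearOrderedCommGroupWithZero Γ]
    (f : A → Γ) : Subgroup Γˣ :=
  Subgroup.closure {γ : Γˣ | ∃ a : A, f a = (γ : Γ)}

/-- Huber's characterization of continuity for valuations on Huber rings
([Hu93], Theorem 3.1). -/
def IsHuberContinuous {A : Type*} [Ring A] [TopologicalSpace A] {Γ : Type*}
    [LinearOrderedCommGroupWithZero Γ] (f : A → Γ) : Prop :=
  ∀ a : A, IsTopologicallyNilpotentElem a → ∀ γ ∈ valueGroupOf f, ∃ n : ℕ, f a ^ n < (γ : Γ)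

/-- A monoid-with-zero homomorphism `φ : Γ → Δ` is a quotient by a convex subgroup if
`φ x = 0 ↔ x = 0` and `φ x < φ y ↔ (x·h < y for all h with φ h = 1)`. -/
def IsQuotientByConvexSubgroup {Γ Δ : Type*} [LinearOrderedCommGroupWithZero Γ]
    [LinearOrderedCommGroupWithZero Δ] (φ : Γ →*₀ Δ) : Prop :=
  (∀ x : Γ, φ x = 0 ↔ x = 0) ∧
  (∀ x y : Γ, φ x < φ y ↔ ∀ h : Γ, φ h = 1 → x * h < y)

/-!
The condition `w(a) < 1` is necessary because `1` lies in every value group. Conversely, every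
element of the value group of `w = φ ∘ v` is the image `φ g` of an element `g` of the value group
of `v`; continuity of `v` gives `v(a)ⁿ < g`, and since `v(a)` lies strictly below the convex
subgroup `ker φ`, one more factor `v(a)` pushes this strict inequality through `φ`.
-/

section

variable {A : Type*} {Γ Δ : Type*} [LinearOrderedCommGroupWithZero Γ]
  [LinearOrderedCommGroupWithZero Δ]

theorem IsHuberContinuous.lt_one [Ring A] [TopologicalSpace A] {f : A → Γ}
    (hf : IsHuberContinuous f) {a : A} (ha : IsTopologicallyNilpotentElem a) : f a < 1 := by
  obtain ⟨n, hn⟩ := hf a ha 1 (one_mem _)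
  by_contra! h
  exact (one_le_pow_of_one_le' h n).not_gt hn

theorem valueGroupOf_comp_le_map (f : A → Γ) (φ : Γ →*₀ Δ) :
    valueGroupOf (fun a => φ (f a)) ≤ (valueGroupOf f).map (Units.map φ.toMonoidHom) := by
  refine (Subgroup.closure_le _).2 ?_
  rintro δ ⟨b, hb⟩
  have hfb : f b ≠ 0 := fun h0 => δ.ne_zero (by rw [← hb]; simp only [h0, map_zero])
  exact ⟨Units.mk0 (f b) hfb, Subgroup.subset_closure ⟨b, rfl⟩, Units.ext hb⟩

theorem IsQuotientByConvexSubgroup.map_mul_lt {φ : Γ →*₀ Δ} (hφ : IsQuotientByConvexSubgroup φ)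
    {x y z : Γ} (hx : φ x < 1) (hyz : y < z) : φ (x * y) < φ z := by
  have hx_kernel : ∀ h, φ h = 1 → x * h < 1 := (hφ.2 x 1).1 (by rwa [map_one])
  refine (hφ.2 _ _).2 fun h hh => ?_
  calc x * y * h = y * (x * h) := by rw [mul_right_comm, mul_comm]
    _ ≤ y := mul_le_of_le_one_right' (hx_kernel h hh).le
    _ < z := hyz

end

/-- A vertical generalization `w = φ ∘ v` of a continuous valuation `v` is continuous if and
only if `w(a) < 1` for every topologically nilpotent `a`. -/
theorem vertical_generalization_continuous_iff
    {A : Type*} [Ring A] [TopologicalSpace A]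
    {Γ Δ : Type*} [LinearOrderedCommGroupWithZero Γ] [LinearOrderedCommGroupWithZero Δ]
    (v : Valuation A Γ) (hv : IsHuberContinuous (⇑v))
    (φ : Γ →*₀ Δ) (hφ : IsQuotientByConvexSubgroup φ) :
    IsHuberContinuous (fun a : A => φ (v a)) ↔
      ∀ a : A, IsTopologicallyNilpotentElem a → φ (v a) < 1 := by
  refine ⟨fun hw a ha => hw.lt_one ha, fun hw_lt_one a ha γ hγ => ?_⟩
  obtain ⟨g, hg, rfl⟩ := valueGroupOf_comp_le_map v φ hγ
  obtain ⟨n, hn⟩ := hv a ha g hg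
  refine ⟨n + 1, show φ (v a) ^ (n + 1) < φ g from ?_⟩
  simpa only [pow_succ', map_pow, map_mul] using hφ.map_mul_lt (hw_lt_one a ha) hn
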